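/- (Corollary 2.3, bounds on the creeping first-passage transform.) For every ε ∈ (0,a) and q ≥ 0, B₁^{(q)}(x; x+ε−a, x+ε) ≤ E[ e^{−q T_{x+ε}^+} 1{T_{x+ε}^+ < ∞, T_{x+ε}^+ < τ_a, X_{T_{x+ε}^+} = x+ε} ] ≤ B₁^{(q)}(x; x−a, x+ε). -/

import Mathlib

open Filter Set
open scoped NNReal ENNReal Topology

noncomputable section

/-- The first time `t ∈ [0,∞)` at which the predicate `P` holds, valued in `[0,∞]`
(with the convention `inf ∅ = ∞`). -/
def hitTime (P : ℝ≥0 → Prop) : ℝ≥0∞ :=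
  sInf ((fun t : ℝ≥0 => (t : ℝ≥0∞)) '' {t | P t})

/-- The first passage time of `f` above the level `y`. -/
def Tplus (f : ℝ≥0 → ℝ) (y : ℝ) : ℝ≥0∞ := hitTime (fun t => y < f t)

/-- The first passage time of `f` below the level `y`. -/
def Tminus (f : ℝ≥0 → ℝ) (y : ℝ) : ℝ≥0∞ := hitTime (fun t => f t < y)

/-- The running maximum `M(t) = sup_{0 ≤ s ≤ t} f(s)`. -/
def runMax (f : ℝ≥0 → ℝ) (t : ℝ≥0) : ℝ := sSup (f '' Set.Iic t)

/-- The drawdown `Y(t) = M(t) − f(t)`. -/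
def drawdown (f : ℝ≥0 → ℝ) (t : ℝ≥0) : ℝ := runMax f t - f t

/-- The first time the drawdown exceeds `a`. -/
def tauD (f : ℝ≥0 → ℝ) (a : ℝ) : ℝ≥0∞ := hitTime (fun t => a < drawdown f t)

/-- Evaluation point of a finite `[0,∞]`-valued time. -/
def ev (T : ℝ≥0∞) : ℝ≥0 := T.toNNReal

end

noncomputable section

open MeasureTheory

open Classical in
/-- Integrand of the two-sided exit quantity `B₁^{(q)}(·;u,v)`, as a function of the
path `f`: `e^{−q T_v^+} 1{T_v^+ < ∞, T_v^+ < T_u^-, f(T_v^+) = v}`. -/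
def b1val (q u v : ℝ) (f : ℝ≥0 → ℝ) : ℝ :=
  if Tplus f v ≠ ⊤ ∧ Tplus f v < Tminus f u ∧ f (ev (Tplus f v)) = v then
    Real.exp (-q * ((ev (Tplus f v) : ℝ))) else 0

open Classical in
/-- Integrand of the overshoot exit quantity `B₂^{(q)}(·,A;u,v)`:
`e^{−q T_v^+} 1{T_v^+ < ∞, T_v^+ < T_u^-, f(T_v^+) − v ∈ A}`. -/
def b2val (q u v : ℝ) (A : Set ℝ) (f : ℝ≥0 → ℝ) : ℝ :=
  if Tplus f v ≠ ⊤ ∧ Tplus f v < Tminus f u ∧ f (ev (Tplus f v)) - v ∈ A then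
    Real.exp (-q * ((ev (Tplus f v) : ℝ))) else 0

open Classical in
/-- Integrand of the downward exit quantity `C^{(q,s)}(·;u,v)`:
`e^{−q T_u^- − s(u − f(T_u^-))} 1{T_u^- < ∞, T_u^- < T_v^+}`. -/
def cval (q s u v : ℝ) (f : ℝ≥0 → ℝ) : ℝ :=
  if Tminus f u ≠ ⊤ ∧ Tminus f u < Tplus f v then
    Real.exp (-q * ((ev (Tminus f u) : ℝ)) - s * (u - f (ev (Tminus f u)))) else 0

open Classical in
/-- `e^{−q T_v^+} 1{T_v^+ < ∞, T_v^+ < τ_a, f(T_v^+) = v}`. -/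
def m1val (q v a : ℝ) (f : ℝ≥0 → ℝ) : ℝ :=
  if Tplus f v ≠ ⊤ ∧ Tplus f v < tauD f a ∧ f (ev (Tplus f v)) = v then
    Real.exp (-q * ((ev (Tplus f v) : ℝ))) else 0

open Classical in
/-- `e^{−q T_v^+} 1{T_v^+ < ∞, T_v^+ < τ_a, f(T_v^+) − v ∈ A}`. -/
def m2val (q v a : ℝ) (A : Set ℝ) (f : ℝ≥0 → ℝ) : ℝ :=
  if Tplus f v ≠ ⊤ ∧ Tplus f v < tauD f a ∧ f (ev (Tplus f v)) - v ∈ A then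
    Real.exp (-q * ((ev (Tplus f v) : ℝ))) else 0

open Classical in
/-- `e^{−q τ_a − s(Y(τ_a) − a)} 1{τ_a < ∞, τ_a < T_v^+}`. -/
def m3val (q s a v : ℝ) (f : ℝ≥0 → ℝ) : ℝ :=
  if tauD f a ≠ ⊤ ∧ tauD f a < Tplus f v then
    Real.exp (-q * ((ev (tauD f a) : ℝ)) - s * (drawdown f (ev (tauD f a)) - a)) else 0

end

open MeasureTheory

section Aux

lemma hitTime_le {P : ℝ≥0 → Prop} {t : ℝ≥0} (h : P t) : hitTime P ≤ (t : ℝ≥0∞) :=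
  sInf_le ⟨t, h, rfl⟩

lemma exists_of_hitTime_lt {P : ℝ≥0 → Prop} {c : ℝ≥0∞} (h : hitTime P < c) :
    ∃ t : ℝ≥0, P t ∧ (t : ℝ≥0∞) < c := by
  obtain ⟨s, hs, hsc⟩ := sInf_lt_iff.mp h
  obtain ⟨t, ht, rfl⟩ := hs
  exact ⟨t, ht, hsc⟩

lemma f_le_of_lt_Tplus {f : ℝ≥0 → ℝ} {v : ℝ} {t : ℝ≥0}
    (h : (t : ℝ≥0∞) < Tplus f v) : f t ≤ v := by
  by_contra hgt
  push_neg at hgt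
  exact absurd (hitTime_le (P := fun s => v < f s) hgt) (not_le.mpr h)

lemma runMax_le {f : ℝ≥0 → ℝ} {t : ℝ≥0} {c : ℝ} (h : ∀ s ≤ t, f s ≤ c) :
    runMax f t ≤ c := by
  refine csSup_le ⟨f 0, ⟨0, by simp, rfl⟩⟩ ?_
  rintro y ⟨s, hs, rfl⟩
  exact h s hs

lemma le_runMax {f : ℝ≥0 → ℝ} {t : ℝ≥0} (hb : ∃ C : ℝ, ∀ s ≤ t, |f s| ≤ C)
    {s : ℝ≥0} (hs : s ≤ t) : f s ≤ runMax f t := by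
  obtain ⟨C, hC⟩ := hb
  refine le_csSup ⟨C, ?_⟩ ⟨s, ⟨hs, rfl⟩⟩
  rintro y ⟨u, hu, rfl⟩
  exact (abs_le.mp (hC u hu)).2

/-- nearby version of right-continuity -/
lemma rc_near {f : ℝ≥0 → ℝ} {T : ℝ≥0} (hrc : ContinuousWithinAt f (Set.Ici T) T)
    {η : ℝ} (hη : 0 < η) :
    ∃ δ : ℝ≥0, 0 < δ ∧ ∀ s : ℝ≥0, T ≤ s → s < T + δ → |f s - f T| < η := by
  rw [ContinuousWithinAt, Metric.tendsto_nhdsWithin_nhds] at hrc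
  obtain ⟨δ, hδ, hd⟩ := hrc η hη
  refine ⟨δ.toNNReal, Real.toNNReal_pos.mpr hδ, fun s hTs hsδ => ?_⟩
  have h1 : dist s T < δ := by
    rw [NNReal.dist_eq, abs_of_nonneg (sub_nonneg.mpr (by exact_mod_cast hTs))]
    have : (s : ℝ) < T + δ.toNNReal := by exact_mod_cast hsδ
    have h2 : (δ.toNNReal : ℝ) = δ := Real.coe_toNNReal _ hδ.le
    linarith [this, h2.le, h2.ge]
  have := hd hTs h1
  rwa [Real.dist_eq] at this

lemma key1 {f : ℝ≥0 → ℝ} {x a ε : ℝ} (ha : 0 < a)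
    (hrc : ∀ t : ℝ≥0, ContinuousWithinAt f (Set.Ici t) t)
    (hT : Tplus f (x + ε) ≠ ⊤)
    (hval : f (ev (Tplus f (x + ε))) = x + ε)
    (hlt : Tplus f (x + ε) < Tminus f (x + ε - a)) :
    Tplus f (x + ε) < tauD f a := by
  set v := x + ε with hv
  by_contra hcon
  push_neg at hcon
  rcases hcon.lt_or_eq with hlt2 | heq
  · -- tauD < Tplus : a drawdown time strictly before Tplus
    obtain ⟨t, hdt, ht⟩ := exists_of_hitTime_lt hlt2
    have hM : runMax f t ≤ v := runMax_le fun s hs =>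
      f_le_of_lt_Tplus (lt_of_le_of_lt (by exact_mod_cast hs) ht)
    have hft : f t < x + ε - a := by
      have : a < runMax f t - f t := hdt
      linarith
    have : Tminus f (x + ε - a) ≤ (t : ℝ≥0∞) := hitTime_le hft
    exact absurd (this.trans_lt (ht.trans hlt)) (lt_irrefl _)
  · -- tauD = Tplus : use right continuity at T
    set T : ℝ≥0 := ev (Tplus f v) with hTdef
    have hTeq : (T : ℝ≥0∞) = Tplus f v := ENNReal.coe_toNNReal hT
    obtain ⟨δ, hδ, hd⟩ := rc_near (hrc T) (half_pos ha)
    have hlt3 : tauD f a < (T : ℝ≥0∞) + (δ : ℝ≥0∞) := by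
      rw [heq, ← hTeq]
      exact ENNReal.lt_add_right (by simp) (by exact_mod_cast hδ.ne')
    obtain ⟨t, hdt, ht⟩ := exists_of_hitTime_lt hlt3
    have hTt : T ≤ t := by
      have : (T : ℝ≥0∞) ≤ (t : ℝ≥0∞) := by
        rw [hTeq, ← heq]; exact hitTime_le hdt
      exact_mod_cast this
    have htδ : t < T + δ := by
      have : (t : ℝ≥0∞) < ((T + δ : ℝ≥0) : ℝ≥0∞) := by
        rw [ENNReal.coe_add]; exact ht
      exact_mod_cast this
    have hM : runMax f t ≤ v + a / 2 := by
      apply runMax_le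
      intro s hs
      rcases lt_or_ge (s : ℝ≥0∞) (Tplus f v) with h1 | h1
      · linarith [f_le_of_lt_Tplus h1]
      · have hTs : T ≤ s := by
          have : (T : ℝ≥0∞) ≤ (s : ℝ≥0∞) := hTeq.le.trans h1
          exact_mod_cast this
        have := hd s hTs (lt_of_le_of_lt hs htδ)
        rw [hval] at this
        have := (abs_lt.mp this).2
        linarith
    have hft : v - a / 2 < f t := by
      have := hd t hTt htδ
      rw [hval] at this
      have := (abs_lt.mp this).1
      linarith
    have : a < runMax f t - f t := hdt
    linarith

lemma key2 {f : ℝ≥0 → ℝ} {x a ε : ℝ} (ha : 0 < a) (hε : 0 < ε)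
    (hrc : ∀ t : ℝ≥0, ContinuousWithinAt f (Set.Ici t) t)
    (hbdd : ∀ b : ℝ≥0, ∃ C : ℝ, ∀ t ≤ b, |f t| ≤ C)
    (h0 : f 0 = x)
    (hT : Tplus f (x + ε) ≠ ⊤)
    (hval : f (ev (Tplus f (x + ε))) = x + ε)
    (hlt : Tplus f (x + ε) < tauD f a) :
    Tplus f (x + ε) < Tminus f (x - a) := by
  set v := x + ε with hv
  by_contra hcon
  push_neg at hcon
  rcases hcon.lt_or_eq with hlt2 | heq
  · -- Tminus < Tplus : a time below x - a strictly before Tplus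
    obtain ⟨t, hft, ht⟩ := exists_of_hitTime_lt hlt2
    have hM : x ≤ runMax f t := h0 ▸ le_runMax ⟨_, fun s hs => (hbdd t).choose_spec s hs⟩
      (zero_le : (0 : ℝ≥0) ≤ t)
    have hdt : a < drawdown f t := by
      have : drawdown f t = runMax f t - f t := rfl
      rw [this]; linarith
    have : tauD f a ≤ (t : ℝ≥0∞) := hitTime_le hdt
    exact absurd (this.trans_lt (ht.trans hlt)) (lt_irrefl _)
  · -- Tminus = Tplus : use right continuity at T
    set T : ℝ≥0 := ev (Tplus f v) with hTdef
    have hTeq : (T : ℝ≥0∞) = Tplus f v := ENNReal.coe_toNNReal hT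
    obtain ⟨δ, hδ, hd⟩ := rc_near (hrc T) ha
    have hlt3 : Tminus f (x - a) < (T : ℝ≥0∞) + (δ : ℝ≥0∞) := by
      rw [heq, ← hTeq]
      exact ENNReal.lt_add_right (by simp) (by exact_mod_cast hδ.ne')
    obtain ⟨t, hft, ht⟩ := exists_of_hitTime_lt hlt3
    have hTt : T ≤ t := by
      have : (T : ℝ≥0∞) ≤ (t : ℝ≥0∞) := by
        rw [hTeq, ← heq]; exact hitTime_le hft
      exact_mod_cast this
    have htδ : t < T + δ := by
      have : (t : ℝ≥0∞) < ((T + δ : ℝ≥0) : ℝ≥0∞) := by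
        rw [ENNReal.coe_add]; exact ht
      exact_mod_cast this
    have := hd t hTt htδ
    rw [hval] at this
    have := (abs_lt.mp this).1
    linarith

lemma m1val_nonneg (q v a : ℝ) (f : ℝ≥0 → ℝ) : 0 ≤ m1val q v a f := by
  unfold m1val; split <;> positivity

lemma b1val_nonneg (q u v : ℝ) (f : ℝ≥0 → ℝ) : 0 ≤ b1val q u v f := by
  unfold b1val; split <;> positivity

end Aux

/-- **Corollary 2.3, bounds on the creeping first-passage transform.**
`B₁^{(q)}(x; x+ε−a, x+ε) ≤ E[e^{−q T_{x+ε}^+} 1{T_{x+ε}^+ < ∞, T_{x+ε}^+ < τ_a,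
X_{T_{x+ε}^+} = x+ε}] ≤ B₁^{(q)}(x; x−a, x+ε)`. -/
theorem creeping_transform_bounds
    {Ω : Type*} [MeasurableSpace Ω] (ℙ : Measure Ω) [IsProbabilityMeasure ℙ]
    (X : Ω → ℝ≥0 → ℝ) (x a : ℝ) (ha : 0 < a)
    (hrc : ∀ ω (t : ℝ≥0), ContinuousWithinAt (X ω) (Set.Ici t) t)
    (hbdd : ∀ ω (b : ℝ≥0), ∃ C : ℝ, ∀ t ≤ b, |X ω t| ≤ C)
    (hX0 : ∀ ω, X ω 0 = x)
    (ε q : ℝ) (hε : 0 < ε) (hεa : ε < a) (hq : 0 ≤ q)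
    (hintL : Integrable (fun ω => b1val q (x + ε - a) (x + ε) (X ω)) ℙ)
    (hintM : Integrable (fun ω => m1val q (x + ε) a (X ω)) ℙ)
    (hintR : Integrable (fun ω => b1val q (x - a) (x + ε) (X ω)) ℙ) :
    (∫ ω, b1val q (x + ε - a) (x + ε) (X ω) ∂ℙ) ≤
      (∫ ω, m1val q (x + ε) a (X ω) ∂ℙ) ∧
    (∫ ω, m1val q (x + ε) a (X ω) ∂ℙ) ≤
      ∫ ω, b1val q (x - a) (x + ε) (X ω) ∂ℙ := by
  constructor
  · apply integral_mono hintL hintM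
    intro ω
    by_cases h : Tplus (X ω) (x + ε) ≠ ⊤ ∧
        Tplus (X ω) (x + ε) < Tminus (X ω) (x + ε - a) ∧
        X ω (ev (Tplus (X ω) (x + ε))) = x + ε
    · have hm : Tplus (X ω) (x + ε) ≠ ⊤ ∧
          Tplus (X ω) (x + ε) < tauD (X ω) a ∧
          X ω (ev (Tplus (X ω) (x + ε))) = x + ε :=
        ⟨h.1, key1 ha (hrc ω) h.1 h.2.2 h.2.1, h.2.2⟩
      unfold b1val m1val
      simp only [if_pos h, if_pos hm, le_refl]
    · simp only
      unfold b1val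
      rw [if_neg h]
      exact m1val_nonneg _ _ _ _
  · apply integral_mono hintM hintR
    intro ω
    by_cases h : Tplus (X ω) (x + ε) ≠ ⊤ ∧
        Tplus (X ω) (x + ε) < tauD (X ω) a ∧
        X ω (ev (Tplus (X ω) (x + ε))) = x + ε
    · have hb : Tplus (X ω) (x + ε) ≠ ⊤ ∧
          Tplus (X ω) (x + ε) < Tminus (X ω) (x - a) ∧
          X ω (ev (Tplus (X ω) (x + ε))) = x + ε :=
        ⟨h.1, key2 ha hε (hrc ω) (hbdd ω) (hX0 ω) h.1 h.2.2 h.2.1, h.2.2⟩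
      unfold m1val b1val
      simp only [if_pos h, if_pos hb, le_refl]
    · simp only
      unfold m1val
      rw [if_neg h]
      exact b1val_nonneg _ _ _ _
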